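/- Let A = (a_i, α_i)_{i=1}^{n_A} and B = (b_j, β_j)_{j=1}^{n_B} be weighted point sets in ℝ^d with Σ_i α_i = Σ_j β_j = W > 0. Let p_1, …, p_N ∈ ℝ^d and let each a_i be assigned to a location p_{σ(i)} with ‖a_i − p_{σ(i)}‖ ≤ r and each b_j to a location p_{τ(j)} with ‖b_j − p_{τ(j)}‖ ≤ r, for some r ≥ 0. Set n_l = Σ_{i : σ(i) = l} α_i and m_l = Σ_{j : τ(j) = l} β_j for each location l. Let A' be the weighted point set consisting of the locations p_l with n_l > m_l, each with weight n_l − m_l, and B' the weighted point set consisting of the locations p_l with m_l > n_l, each with weight m_l − n_l. Then |Cost(A', B') − Cost(A, B)| ≤ 2rW, where Cost denotes the unnormalized minimum transportation cost. -/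

import Mathlib

noncomputable section

/-- A feasible flow between weighted point sets with weights `α` and `β`. -/
def IsFeasibleFlow {nA nB : ℕ} (α : Fin nA → ℝ) (β : Fin nB → ℝ)
    (f : Fin nA → Fin nB → ℝ) : Prop :=
  (∀ i j, 0 ≤ f i j) ∧ (∀ j, ∑ i, f i j = β j) ∧ (∀ i, ∑ j, f i j = α i)

/-- The unnormalized minimum transportation cost between the weighted point sets
`(a, α)` and `(b, β)`. -/
def Cost {d nA nB : ℕ} (a : Fin nA → EuclideanSpace ℝ (Fin d)) (α : Fin nA → ℝ)
    (b : Fin nB → EuclideanSpace ℝ (Fin d)) (β : Fin nB → ℝ) : ℝ :=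
  sInf {c : ℝ | ∃ f, IsFeasibleFlow α β f ∧ c = ∑ i, ∑ j, f i j * ‖a i - b j‖}

/-!
Moving every point to its assigned location changes the cost of a flow by at most `2 r` per
unit of mass. Conversely a flow between the location weights `n`, `m` splits, proportionally to
the weights of the points at each location, into a flow between `A` and `B` of which it is the
push-forward. Hence `Cost(n, m)` is within `2 r W` of `Cost(A, B)`.

The mass `min (n l) (m l)` present on both sides of a location `l` can be cancelled without
increasing the cost: the flow entering `l` is rerouted along the flow leaving `l`, which by the
triangle inequality costs no more. Adding it back on the diagonal costs nothing, so
`Cost(n, m) = Cost(A', B')`.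
-/

open Finset

lemma exists_isFeasibleFlow {nA nB : ℕ} {α : Fin nA → ℝ} {β : Fin nB → ℝ}
    (hα : ∀ i, 0 ≤ α i) (hβ : ∀ j, 0 ≤ β j) (hsum : ∑ i, α i = ∑ j, β j) :
    ∃ f, IsFeasibleFlow α β f := by
  have hα0 : ∑ i, α i = 0 → ∀ i, α i = 0 := fun h i =>
    (sum_eq_zero_iff_of_nonneg fun i _ => hα i).1 h i (mem_univ i)
  have hβ0 : ∑ i, α i = 0 → ∀ j, β j = 0 := fun h j =>
    (sum_eq_zero_iff_of_nonneg fun j _ => hβ j).1 (hsum ▸ h) j (mem_univ j)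
  refine ⟨fun i j => α i * β j / ∑ k, α k,
    fun i j => div_nonneg (mul_nonneg (hα i) (hβ j)) (sum_nonneg fun k _ => hα k),
    fun j => ?_, fun i => ?_⟩
  · rw [← sum_div, ← sum_mul]
    exact mul_div_cancel_left_of_imp fun h => hβ0 h j
  · rw [← sum_div, ← mul_sum, ← hsum]
    exact mul_div_cancel_of_imp fun h => hα0 h i

section Flows

variable {X : Type*} [PseudoMetricSpace X]

def flowCost {nA nB : ℕ} (x : Fin nA → X) (y : Fin nB → X) (f : Fin nA → Fin nB → ℝ) : ℝ :=
  ∑ i, ∑ j, f i j * dist (x i) (y j)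

lemma flowCost_nonneg {nA nB : ℕ} (x : Fin nA → X) (y : Fin nB → X)
    {f : Fin nA → Fin nB → ℝ} (hf : ∀ i j, 0 ≤ f i j) : 0 ≤ flowCost x y f :=
  sum_nonneg fun i _ => sum_nonneg fun j _ => mul_nonneg (hf i j) dist_nonneg

lemma IsFeasibleFlow.transpose {nA nB : ℕ} {α : Fin nA → ℝ} {β : Fin nB → ℝ}
    {f : Fin nA → Fin nB → ℝ} (hf : IsFeasibleFlow α β f) :
    IsFeasibleFlow β α (fun j i => f i j) :=
  ⟨fun j i => hf.1 i j, hf.2.2, hf.2.1⟩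

lemma flowCost_transpose {nA nB : ℕ} (x : Fin nA → X) (y : Fin nB → X)
    (f : Fin nA → Fin nB → ℝ) : flowCost y x (fun j i => f i j) = flowCost x y f := by
  simp only [flowCost, dist_comm (y _)]
  exact sum_comm

variable {N : ℕ} {n m : Fin N → ℝ} {g : Fin N → Fin N → ℝ}

lemma IsFeasibleFlow.eq_zero_of_row (hg : IsFeasibleFlow n m g) {l : Fin N} (h : n l = 0)
    (l' : Fin N) : g l l' = 0 :=
  (sum_eq_zero_iff_of_nonneg fun k _ => hg.1 l k).1 ((hg.2.2 l).trans h) l' (mem_univ l')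

lemma IsFeasibleFlow.eq_zero_of_col (hg : IsFeasibleFlow n m g) {l' : Fin N} (h : m l' = 0)
    (l : Fin N) : g l l' = 0 :=
  (sum_eq_zero_iff_of_nonneg fun k _ => hg.1 k l').1 ((hg.2.1 l').trans h) l (mem_univ l)

end Flows

lemma sum_ite_eq_zero_sub {ι : Type*} [Fintype ι] [DecidableEq ι] (i₀ : ι) (F : ι → ℝ) :
    ∑ i, (if i = i₀ then 0 else F i) = ∑ i, F i - F i₀ := by
  rw [← sum_erase_eq_sub (mem_univ i₀), sum_ite, sum_const_zero, zero_add, filter_ne']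

section Reroute

variable {X : Type*} [PseudoMetricSpace X]

/-- Row `l₀` is emptied; instead, the mass `g l l₀` that `l ≠ l₀` sends to `l₀` is forwarded to
each `l' ≠ l₀` in the proportion `g l₀ l' / μ`, where `μ` is the mass entering `l₀` from the
other locations. -/
def rerouteFlow {N : ℕ} (g : Fin N → Fin N → ℝ) (l₀ : Fin N) : Fin N → Fin N → ℝ :=
  fun l l' => if l = l₀ then 0 else
    g l l' + g l l₀ * (g l₀ l' - if l' = l₀ then ∑ k, g l₀ k else 0) / (∑ k, g k l₀ - g l₀ l₀)

variable {N : ℕ} {g : Fin N → Fin N → ℝ} {l₀ : Fin N}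

lemma sum_rerouteFlow_row (l : Fin N) :
    ∑ l', rerouteFlow g l₀ l l' = if l = l₀ then 0 else ∑ l', g l l' := by
  unfold rerouteFlow
  split_ifs
  · exact sum_const_zero
  · simp_rw [sum_add_distrib, mul_div_assoc, ← mul_sum, ← sum_div, sum_sub_distrib,
      sum_ite_eq', if_pos (mem_univ _), sub_self, zero_div, mul_zero, add_zero]

lemma sum_rerouteFlow_col (hg : ∀ l l', 0 ≤ g l l') (hle : ∑ k, g l₀ k ≤ ∑ k, g k l₀)
    (l' : Fin N) :
    ∑ l, rerouteFlow g l₀ l l' = ∑ l, g l l' - if l' = l₀ then ∑ k, g l₀ k else 0 := by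
  set v : Fin N → ℝ := fun l' => g l₀ l' - if l' = l₀ then ∑ k, g l₀ k else 0
  set μ := ∑ k, g k l₀ - g l₀ l₀
  have hD : g l₀ l₀ ≤ ∑ k, g l₀ k := single_le_sum (fun k _ => hg l₀ k) (mem_univ l₀)
  have hv : μ = 0 → v l' = 0 := by
    intro hμ
    have hrow : ∑ k, g l₀ k = g l₀ l₀ := by linarith
    by_cases h : l' = l₀
    · simp [v, h, hrow]
    · have hzero := (sum_eq_zero_iff_of_nonneg fun k _ => hg l₀ k).1
        ((sum_erase_eq_sub (mem_univ l₀)).trans (sub_eq_zero.2 hrow))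
      simp [v, h, hzero l' (mem_erase.2 ⟨h, mem_univ l'⟩)]
  calc ∑ l, rerouteFlow g l₀ l l'
      = ∑ l, (g l l' + g l l₀ * v l' / μ) - (g l₀ l' + g l₀ l₀ * v l' / μ) :=
        sum_ite_eq_zero_sub l₀ _
    _ = ∑ l, g l l' - g l₀ l' + μ * v l' / μ := by
        simp_rw [sum_add_distrib, ← sum_div, ← sum_mul, μ]; ring
    _ = ∑ l, g l l' - if l' = l₀ then ∑ k, g l₀ k else 0 := by
        rw [mul_div_cancel_left_of_imp hv]; ring

lemma rerouteFlow_nonneg (hg : ∀ l l', 0 ≤ g l l') (hle : ∑ k, g l₀ k ≤ ∑ k, g k l₀)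
    (l l' : Fin N) : 0 ≤ rerouteFlow g l₀ l l' := by
  have hD : g l₀ l₀ ≤ ∑ k, g l₀ k := single_le_sum (fun k _ => hg l₀ k) (mem_univ l₀)
  have hμ : 0 ≤ ∑ k, g k l₀ - g l₀ l₀ := by linarith
  unfold rerouteFlow
  split_ifs with hl hl'
  · exact le_rfl
  · rw [hl']
    have hfrac : (∑ k, g l₀ k - g l₀ l₀) / (∑ k, g k l₀ - g l₀ l₀) ≤ 1 :=
      div_le_one_of_le₀ (by linarith) hμ
    have hfactor : g l l₀ + g l l₀ * (g l₀ l₀ - ∑ k, g l₀ k) / (∑ k, g k l₀ - g l₀ l₀) =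
        g l l₀ * (1 - (∑ k, g l₀ k - g l₀ l₀) / (∑ k, g k l₀ - g l₀ l₀)) := by ring
    rw [hfactor]
    exact mul_nonneg (hg l l₀) (sub_nonneg.2 hfrac)
  · rw [sub_zero]
    exact add_nonneg (hg l l') (div_nonneg (mul_nonneg (hg l l₀) (hg l₀ l')) hμ)

lemma flowCost_rerouteFlow_le (p : Fin N → X) (hg : ∀ l l', 0 ≤ g l l') :
    flowCost p p (rerouteFlow g l₀) ≤ flowCost p p g := by
  set R := ∑ k, g l₀ k
  set μ := ∑ k, g k l₀ - g l₀ l₀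
  set Vmax := ∑ l', g l₀ l' * dist (p l₀) (p l')
  set V : Fin N → ℝ := fun l => ∑ l', g l₀ l' * dist (p l) (p l') - R * dist (p l) (p l₀)
  have hμ : 0 ≤ μ := by
    simpa [μ] using single_le_sum (fun k _ => hg k l₀) (mem_univ l₀)
  have hV : ∀ l, V l ≤ Vmax := by
    intro l
    simp only [V, Vmax, R, sum_mul, ← sum_sub_distrib, ← mul_sub]
    refine sum_le_sum fun l' _ => mul_le_mul_of_nonneg_left ?_ (hg l₀ l')
    linarith [dist_triangle (p l) (p l₀) (p l')]
  have hV₀ : V l₀ = Vmax := by simp [V, Vmax]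
  have hrow : ∀ l, ∑ l', rerouteFlow g l₀ l l' * dist (p l) (p l') =
      if l = l₀ then 0 else ∑ l', g l l' * dist (p l) (p l') + g l l₀ / μ * V l := by
    intro l
    unfold rerouteFlow
    split_ifs
    · simp
    · have hterm : ∀ l', (g l l' + g l l₀ * (g l₀ l' - if l' = l₀ then ∑ k, g l₀ k else 0) /
            (∑ k, g k l₀ - g l₀ l₀)) * dist (p l) (p l') =
          g l l' * dist (p l) (p l') + g l l₀ / μ *
            (g l₀ l' * dist (p l) (p l') - (if l' = l₀ then R else 0) * dist (p l) (p l')) :=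
        fun l' => by ring
      simp_rw [hterm, sum_add_distrib, ← mul_sum, sum_sub_distrib, ite_mul, zero_mul,
        sum_ite_eq', if_pos (mem_univ _)]
      rfl
  have hforwarded : ∑ l, g l l₀ / μ * Vmax - g l₀ l₀ / μ * Vmax ≤ Vmax := by
    rw [← sum_mul, ← sum_div, ← sub_mul, ← sub_div]
    exact mul_le_of_le_one_left (sum_nonneg fun k _ => mul_nonneg (hg l₀ k) dist_nonneg)
      (div_self_le_one μ)
  calc flowCost p p (rerouteFlow g l₀)
      = ∑ l, (∑ l', g l l' * dist (p l) (p l') + g l l₀ / μ * V l) -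
          (Vmax + g l₀ l₀ / μ * V l₀) := by
        rw [flowCost, sum_congr rfl fun l _ => hrow l, sum_ite_eq_zero_sub]
    _ ≤ ∑ l, (∑ l', g l l' * dist (p l) (p l') + g l l₀ / μ * Vmax) -
          (Vmax + g l₀ l₀ / μ * Vmax) := by
        rw [hV₀]
        gcongr with l
        exacts [div_nonneg (hg l l₀) hμ, hV l]
    _ ≤ flowCost p p g := by
        rw [sum_add_distrib]
        simp only [flowCost]
        linarith

variable {n m : Fin N → ℝ}

lemma IsFeasibleFlow.reroute (hg : IsFeasibleFlow n m g) (hle : n l₀ ≤ m l₀) :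
    IsFeasibleFlow (Function.update n l₀ 0) (Function.update m l₀ (m l₀ - n l₀))
      (rerouteFlow g l₀) := by
  obtain ⟨hg0, hcol, hrow⟩ := hg
  have hle' : ∑ k, g l₀ k ≤ ∑ k, g k l₀ := by rwa [hrow, hcol]
  refine ⟨rerouteFlow_nonneg hg0 hle', fun l' => ?_, fun l => ?_⟩
  · rw [sum_rerouteFlow_col hg0 hle', hcol, hrow, Function.update_apply]
    split_ifs with h
    · rw [h]
    · rw [sub_zero]
  · rw [sum_rerouteFlow_row, hrow, Function.update_apply]

lemma IsFeasibleFlow.exists_cancel_at (p : Fin N → X) (hg : IsFeasibleFlow n m g) (l₀ : Fin N) :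
    ∃ g', IsFeasibleFlow (Function.update n l₀ (n l₀ - min (n l₀) (m l₀)))
      (Function.update m l₀ (m l₀ - min (n l₀) (m l₀))) g' ∧
      flowCost p p g' ≤ flowCost p p g := by
  rcases le_total (n l₀) (m l₀) with hle | hle
  · refine ⟨rerouteFlow g l₀, ?_, flowCost_rerouteFlow_le p hg.1⟩
    rw [min_eq_left hle, sub_self]
    exact hg.reroute hle
  · refine ⟨fun l l' => rerouteFlow (fun l l' => g l' l) l₀ l' l, ?_, ?_⟩
    · rw [min_eq_right hle, sub_self]
      exact (hg.transpose.reroute hle).transpose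
    · rw [flowCost_transpose, ← flowCost_transpose p p g]
      exact flowCost_rerouteFlow_le p hg.transpose.1

lemma IsFeasibleFlow.exists_cancel (p : Fin N → X) (hg : IsFeasibleFlow n m g)
    (s : Finset (Fin N)) :
    ∃ g', IsFeasibleFlow (fun l => if l ∈ s then n l - min (n l) (m l) else n l)
      (fun l => if l ∈ s then m l - min (n l) (m l) else m l) g' ∧
      flowCost p p g' ≤ flowCost p p g := by
  classical
  induction s using Finset.induction_on with
  | empty => exact ⟨g, by simpa using hg, le_rfl⟩
  | insert a s ha ih =>
    obtain ⟨g₁, hg₁, hcost₁⟩ := ih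
    obtain ⟨g₂, hg₂, hcost₂⟩ := hg₁.exists_cancel_at p a
    refine ⟨g₂, ?_, hcost₂.trans hcost₁⟩
    convert hg₂ using 1 <;>
    · ext l
      by_cases h : l = a
      · subst h; simp [ha]
      · simp [h]

lemma max_sub_zero_add_min {α : Type*} [AddCommGroup α] [LinearOrder α] [IsOrderedAddMonoid α]
    (a b : α) : max (a - b) 0 + min a b = a := by
  rcases le_total a b with h | h <;> simp [h]

lemma IsFeasibleFlow.exists_excess (p : Fin N → X) (hg : IsFeasibleFlow n m g) :
    ∃ g', IsFeasibleFlow (fun l => max (n l - m l) 0) (fun l => max (m l - n l) 0) g' ∧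
      flowCost p p g' ≤ flowCost p p g := by
  obtain ⟨g', hg', hcost⟩ := hg.exists_cancel p univ
  refine ⟨g', ?_, hcost⟩
  convert hg' using 1 <;> ext l
  · rw [if_pos (mem_univ l)]
    exact eq_sub_of_add_eq (max_sub_zero_add_min _ _)
  · rw [if_pos (mem_univ l), min_comm]
    exact eq_sub_of_add_eq (max_sub_zero_add_min _ _)

lemma IsFeasibleFlow.add_diagonal (hg : IsFeasibleFlow n m g) {c : Fin N → ℝ}
    (hc : ∀ l, 0 ≤ c l) :
    IsFeasibleFlow (n + c) (m + c) (fun l l' => g l l' + Matrix.diagonal c l l') := by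
  refine ⟨fun l l' => add_nonneg (hg.1 l l') ?_, fun l' => ?_, fun l => ?_⟩
  · by_cases h : l = l'
    · simp [h, hc]
    · simp [h]
  · simp [sum_add_distrib, hg.2.1, Matrix.diagonal_apply]
  · simp [sum_add_distrib, hg.2.2, Matrix.diagonal_apply]

lemma flowCost_add_diagonal (p : Fin N → X) (g : Fin N → Fin N → ℝ) (c : Fin N → ℝ) :
    flowCost p p (fun l l' => g l l' + Matrix.diagonal c l l') = flowCost p p g := by
  simp [flowCost, add_mul, sum_add_distrib, Matrix.diagonal_apply]

end Reroute

lemma sum_fiberwise_apply {ι κ : Type*} [Fintype ι] [Fintype κ] [DecidableEq κ] (σ : ι → κ)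
    (F : ι → κ → ℝ) : ∑ k, ∑ i ∈ univ.filter (fun i => σ i = k), F i k = ∑ i, F i (σ i) := by
  rw [← sum_fiberwise univ σ (fun i => F i (σ i))]
  exact sum_congr rfl fun k _ => sum_congr rfl fun i hi => by rw [(mem_filter.1 hi).2]

lemma mul_sum_div_sum_eq {ι : Type*} {s : Finset ι} {w : ι → ℝ} {x : ℝ}
    (hx : ∑ i ∈ s, w i = 0 → x = 0) : ∑ i ∈ s, x * (w i / ∑ k ∈ s, w k) = x := by
  rw [← mul_sum, ← sum_div, ← mul_div_assoc, mul_div_cancel_of_imp hx]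

section Push

variable {X : Type*} [PseudoMetricSpace X] {N nA nB : ℕ} (σ : Fin nA → Fin N) (τ : Fin nB → Fin N)

def pushWeights (α : Fin nA → ℝ) (l : Fin N) : ℝ :=
  ∑ i ∈ univ.filter (fun i => σ i = l), α i

def pushFlow (f : Fin nA → Fin nB → ℝ) (l l' : Fin N) : ℝ :=
  ∑ i ∈ univ.filter (fun i => σ i = l), ∑ j ∈ univ.filter (fun j => τ j = l'), f i j

def splitFlow (α : Fin nA → ℝ) (β : Fin nB → ℝ) (g : Fin N → Fin N → ℝ) (i : Fin nA)
    (j : Fin nB) : ℝ :=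
  g (σ i) (τ j) * (α i / pushWeights σ α (σ i)) * (β j / pushWeights τ β (τ j))

variable {σ τ} {α : Fin nA → ℝ} {β : Fin nB → ℝ}

lemma sum_pushWeights (α : Fin nA → ℝ) : ∑ l, pushWeights σ α l = ∑ i, α i :=
  sum_fiberwise univ σ α

lemma pushWeights_nonneg (hα : ∀ i, 0 ≤ α i) (l : Fin N) : 0 ≤ pushWeights σ α l :=
  sum_nonneg fun i _ => hα i

lemma eq_zero_of_pushWeights_eq_zero (hα : ∀ i, 0 ≤ α i) {i : Fin nA}
    (h : pushWeights σ α (σ i) = 0) : α i = 0 :=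
  (sum_eq_zero_iff_of_nonneg fun k _ => hα k).1 h i (mem_filter.2 ⟨mem_univ i, rfl⟩)

lemma IsFeasibleFlow.push {f : Fin nA → Fin nB → ℝ} (hf : IsFeasibleFlow α β f) :
    IsFeasibleFlow (pushWeights σ α) (pushWeights τ β) (pushFlow σ τ f) := by
  refine ⟨fun l l' => sum_nonneg fun i _ => sum_nonneg fun j _ => hf.1 i j,
    fun l' => ?_, fun l => ?_⟩
  · simp only [pushFlow]
    rw [sum_fiberwise univ σ, sum_comm]
    exact sum_congr rfl fun j _ => hf.2.1 j
  · simp only [pushFlow]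
    rw [sum_comm]
    refine sum_congr rfl fun i _ => ?_
    rw [sum_fiberwise univ τ, hf.2.2 i]

lemma flowCost_pushFlow (p : Fin N → X) (f : Fin nA → Fin nB → ℝ) :
    flowCost p p (pushFlow σ τ f) = ∑ i, ∑ j, f i j * dist (p (σ i)) (p (τ j)) := by
  rw [← sum_fiberwise_apply σ (fun i l => ∑ j, f i j * dist (p l) (p (τ j)))]
  refine sum_congr rfl fun l _ => ?_
  simp only [pushFlow, sum_mul]
  rw [sum_comm]
  refine sum_congr rfl fun i _ => ?_
  exact sum_fiberwise_apply τ (fun j l' => f i j * dist (p l) (p l'))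

lemma abs_flowCost_pushFlow_sub_le {a : Fin nA → X} {b : Fin nB → X} {p : Fin N → X} {r : ℝ}
    (hσ : ∀ i, dist (a i) (p (σ i)) ≤ r) (hτ : ∀ j, dist (b j) (p (τ j)) ≤ r)
    {f : Fin nA → Fin nB → ℝ} (hf : IsFeasibleFlow α β f) :
    |flowCost p p (pushFlow σ τ f) - flowCost a b f| ≤ 2 * r * ∑ i, α i := by
  have hterm : ∀ i j, |f i j * dist (p (σ i)) (p (τ j)) - f i j * dist (a i) (b j)| ≤
      f i j * (2 * r) := by
    intro i j
    rw [← mul_sub, abs_mul, abs_of_nonneg (hf.1 i j), ← Real.dist_eq]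
    gcongr
    · exact hf.1 i j
    · calc _ ≤ dist (p (σ i)) (a i) + dist (p (τ j)) (b j) := dist_dist_dist_le _ _ _ _
        _ ≤ 2 * r := by rw [dist_comm, dist_comm (p _)]; linarith [hσ i, hτ j]
  calc |flowCost p p (pushFlow σ τ f) - flowCost a b f|
      = |∑ i, ∑ j, (f i j * dist (p (σ i)) (p (τ j)) - f i j * dist (a i) (b j))| := by
        rw [flowCost_pushFlow]
        simp only [flowCost, sum_sub_distrib]
    _ ≤ ∑ i, ∑ j, |f i j * dist (p (σ i)) (p (τ j)) - f i j * dist (a i) (b j)| :=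
        (abs_sum_le_sum_abs _ _).trans (sum_le_sum fun i _ => abs_sum_le_sum_abs _ _)
    _ ≤ ∑ i, ∑ j, f i j * (2 * r) := sum_le_sum fun i _ => sum_le_sum fun j _ => hterm i j
    _ = 2 * r * ∑ i, α i := by simp only [← sum_mul, hf.2.2, mul_comm]

variable {g : Fin N → Fin N → ℝ}

lemma sum_fiber_splitFlow_right
    (hg : IsFeasibleFlow (pushWeights σ α) (pushWeights τ β) g) (i : Fin nA) (l' : Fin N) :
    ∑ j ∈ univ.filter (fun j => τ j = l'), splitFlow σ τ α β g i j =
      g (σ i) l' * (α i / pushWeights σ α (σ i)) := by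
  refine (sum_congr rfl fun j hj => ?_).trans
    (mul_sum_div_sum_eq fun h => by rw [hg.eq_zero_of_col h, zero_mul])
  simp only [splitFlow, (mem_filter.1 hj).2]
  rfl

lemma sum_fiber_splitFlow_left
    (hg : IsFeasibleFlow (pushWeights σ α) (pushWeights τ β) g) (j : Fin nB) (l : Fin N) :
    ∑ i ∈ univ.filter (fun i => σ i = l), splitFlow σ τ α β g i j =
      g l (τ j) * (β j / pushWeights τ β (τ j)) := by
  refine (sum_congr rfl fun i hi => ?_).trans
    (mul_sum_div_sum_eq fun h => by rw [hg.eq_zero_of_row h, zero_mul])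
  simp only [splitFlow, (mem_filter.1 hi).2]
  rw [mul_right_comm]
  rfl

lemma IsFeasibleFlow.split (hα : ∀ i, 0 ≤ α i) (hβ : ∀ j, 0 ≤ β j)
    (hg : IsFeasibleFlow (pushWeights σ α) (pushWeights τ β) g) :
    IsFeasibleFlow α β (splitFlow σ τ α β g) := by
  refine ⟨fun i j => ?_, fun j => ?_, fun i => ?_⟩
  · exact mul_nonneg (mul_nonneg (hg.1 _ _) (div_nonneg (hα i) (pushWeights_nonneg hα _)))
      (div_nonneg (hβ j) (pushWeights_nonneg hβ _))
  · rw [← sum_fiberwise univ σ, sum_congr rfl fun l _ => sum_fiber_splitFlow_left hg j l,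
      ← sum_mul, hg.2.1]
    exact mul_div_cancel_of_imp' (eq_zero_of_pushWeights_eq_zero hβ)
  · rw [← sum_fiberwise univ τ, sum_congr rfl fun l' _ => sum_fiber_splitFlow_right hg i l',
      ← sum_mul, hg.2.2]
    exact mul_div_cancel_of_imp' (eq_zero_of_pushWeights_eq_zero hα)

lemma pushFlow_splitFlow (hg : IsFeasibleFlow (pushWeights σ α) (pushWeights τ β) g) :
    pushFlow σ τ (splitFlow σ τ α β g) = g := by
  ext l l'
  simp only [pushFlow, sum_fiber_splitFlow_right hg]
  refine (sum_congr rfl fun i hi => ?_).trans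
    (mul_sum_div_sum_eq fun h => by rw [hg.eq_zero_of_row h])
  rw [(mem_filter.1 hi).2]
  rfl

end Push

section Cost

variable {d nA nB : ℕ} {a : Fin nA → EuclideanSpace ℝ (Fin d)} {α : Fin nA → ℝ}
  {b : Fin nB → EuclideanSpace ℝ (Fin d)} {β : Fin nB → ℝ}

lemma Cost_eq_sInf_flowCost :
    Cost a α b β = sInf {c | ∃ f, IsFeasibleFlow α β f ∧ c = flowCost a b f} := by
  simp only [Cost, flowCost, dist_eq_norm]

lemma Cost_le_Cost_add {nA' nB' : ℕ} {a' : Fin nA' → EuclideanSpace ℝ (Fin d)}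
    {α' : Fin nA' → ℝ} {b' : Fin nB' → EuclideanSpace ℝ (Fin d)} {β' : Fin nB' → ℝ} {C : ℝ}
    (hne : ∃ f, IsFeasibleFlow α β f)
    (h : ∀ f, IsFeasibleFlow α β f →
      ∃ g, IsFeasibleFlow α' β' g ∧ flowCost a' b' g ≤ flowCost a b f + C) :
    Cost a' α' b' β' ≤ Cost a α b β + C := by
  rw [Cost_eq_sInf_flowCost, Cost_eq_sInf_flowCost, ← sub_le_iff_le_add]
  obtain ⟨f₀, hf₀⟩ := hne
  refine le_csInf ⟨_, f₀, hf₀, rfl⟩ ?_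
  rintro _ ⟨f, hf, rfl⟩
  obtain ⟨g, hg, hcost⟩ := h f hf
  have hbdd : BddBelow {c | ∃ g, IsFeasibleFlow α' β' g ∧ c = flowCost a' b' g} :=
    ⟨0, by rintro _ ⟨g, hg, rfl⟩; exact flowCost_nonneg a' b' hg.1⟩
  exact sub_le_iff_le_add.2 ((csInf_le hbdd ⟨g, hg, rfl⟩).trans hcost)

lemma Cost_excess_eq {N : ℕ} (p : Fin N → EuclideanSpace ℝ (Fin d)) {n m : Fin N → ℝ}
    (hn : ∀ l, 0 ≤ n l) (hm : ∀ l, 0 ≤ m l) (hsum : ∑ l, n l = ∑ l, m l) :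
    Cost p (fun l => max (n l - m l) 0) p (fun l => max (m l - n l) 0) = Cost p n p m := by
  have hexcess : ∑ l, max (n l - m l) 0 = ∑ l, max (m l - n l) 0 := by
    have hl : ∀ l, max (n l - m l) 0 - max (m l - n l) 0 = n l - m l := fun l => by
      rw [← neg_sub (n l), max_zero_sub_max_neg_zero_eq_self]
    rw [← sub_eq_zero, ← sum_sub_distrib, sum_congr rfl fun l _ => hl l, sum_sub_distrib, hsum,
      sub_self]
  refine le_antisymm ?_ ?_
  · refine (Cost_le_Cost_add (C := 0) (exists_isFeasibleFlow hn hm hsum) fun g hg => ?_).trans_eq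
      (add_zero _)
    simpa using hg.exists_excess p
  · refine (Cost_le_Cost_add (C := 0) (exists_isFeasibleFlow (fun l => le_max_right _ _)
      (fun l => le_max_right _ _) hexcess) fun g hg => ?_).trans_eq (add_zero _)
    refine ⟨_, ?_, (flowCost_add_diagonal p g fun l => min (n l) (m l)).trans_le
      (le_add_of_nonneg_right le_rfl)⟩
    convert hg.add_diagonal (c := fun l => min (n l) (m l)) (fun l => le_min (hn l) (hm l))
      using 1 <;> ext l
    · exact (max_sub_zero_add_min (n l) (m l)).symm
    · rw [Pi.add_apply, min_comm]
      exact (max_sub_zero_add_min (m l) (n l)).symm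

lemma abs_Cost_pushWeights_sub_le {N : ℕ} {p : Fin N → EuclideanSpace ℝ (Fin d)}
    {σ : Fin nA → Fin N} {τ : Fin nB → Fin N} {r : ℝ}
    (hα : ∀ i, 0 ≤ α i) (hβ : ∀ j, 0 ≤ β j) (hsum : ∑ i, α i = ∑ j, β j)
    (hσ : ∀ i, ‖a i - p (σ i)‖ ≤ r) (hτ : ∀ j, ‖b j - p (τ j)‖ ≤ r) :
    |Cost p (pushWeights σ α) p (pushWeights τ β) - Cost a α b β| ≤ 2 * r * ∑ i, α i := by
  have hσ' : ∀ i, dist (a i) (p (σ i)) ≤ r := fun i => (dist_eq_norm _ _).trans_le (hσ i)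
  have hτ' : ∀ j, dist (b j) (p (τ j)) ≤ r := fun j => (dist_eq_norm _ _).trans_le (hτ j)
  rw [abs_sub_le_iff, sub_le_iff_le_add', sub_le_iff_le_add']
  constructor
  · refine Cost_le_Cost_add (exists_isFeasibleFlow hα hβ hsum) fun f hf => ⟨_, hf.push, ?_⟩
    linarith [(abs_le.1 (abs_flowCost_pushFlow_sub_le hσ' hτ' hf)).2]
  · refine Cost_le_Cost_add (exists_isFeasibleFlow (pushWeights_nonneg hα) (pushWeights_nonneg hβ)
      (by rw [sum_pushWeights, sum_pushWeights, hsum])) fun g hg => ⟨_, hg.split hα hβ, ?_⟩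
    have hcost := abs_flowCost_pushFlow_sub_le hσ' hτ' (hg.split hα hβ)
    rw [pushFlow_splitFlow hg] at hcost
    linarith [(abs_le.1 hcost).1]

end Cost

theorem reduced_instance_cost_error_general
    {d nA nB N : ℕ}
    (a : Fin nA → EuclideanSpace ℝ (Fin d)) (α : Fin nA → ℝ)
    (b : Fin nB → EuclideanSpace ℝ (Fin d)) (β : Fin nB → ℝ)
    (W : ℝ)
    (hα : ∀ i, 0 ≤ α i) (hβ : ∀ j, 0 ≤ β j)
    (hαW : ∑ i, α i = W) (hβW : ∑ j, β j = W)
    (p : Fin N → EuclideanSpace ℝ (Fin d))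
    (σ : Fin nA → Fin N) (τ : Fin nB → Fin N)
    (r : ℝ)
    (hσ : ∀ i, ‖a i - p (σ i)‖ ≤ r) (hτ : ∀ j, ‖b j - p (τ j)‖ ≤ r)
    (n m : Fin N → ℝ)
    (hn : ∀ l, n l = ∑ i ∈ Finset.univ.filter (fun i => σ i = l), α i)
    (hm : ∀ l, m l = ∑ j ∈ Finset.univ.filter (fun j => τ j = l), β j) :
    |Cost p (fun l => max (n l - m l) 0) p (fun l => max (m l - n l) 0)
        - Cost a α b β| ≤ 2 * r * W := by
  obtain rfl : n = pushWeights σ α := funext hn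
  obtain rfl : m = pushWeights τ β := funext hm
  rw [Cost_excess_eq p (pushWeights_nonneg hα) (pushWeights_nonneg hβ)
    (by rw [sum_pushWeights, sum_pushWeights, hαW, hβW]), ← hαW]
  exact abs_Cost_pushWeights_sub_le hα hβ (hαW.trans hβW.symm) hσ hτ

/-- **Lemma 2 (unnormalized form).** Assign each point `a i` to a location `p (σ i)`
within distance `r`, and each `b j` to a location `p (τ j)` within distance `r`.
Let `n l`, `m l` be the total weights of `A`, `B` assigned to location `l`, and build
the reduced instance `A'`, `B'` on the locations with supplies `max (n l - m l) 0` and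
demands `max (m l - n l) 0` (i.e. `A'` consists of the locations with `n l > m l`, with
weight `n l - m l`, and `B'` of the locations with `m l > n l`, with weight `m l - n l`).
Then the unnormalized minimum transportation costs satisfy
`|Cost(A', B') - Cost(A, B)| ≤ 2 r W`. -/
theorem reduced_instance_cost_error
    {d nA nB N : ℕ}
    (a : Fin nA → EuclideanSpace ℝ (Fin d)) (α : Fin nA → ℝ)
    (b : Fin nB → EuclideanSpace ℝ (Fin d)) (β : Fin nB → ℝ)
    (W : ℝ) (hW : 0 < W)
    (hα : ∀ i, 0 ≤ α i) (hβ : ∀ j, 0 ≤ β j)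
    (hαW : ∑ i, α i = W) (hβW : ∑ j, β j = W)
    (p : Fin N → EuclideanSpace ℝ (Fin d))
    (σ : Fin nA → Fin N) (τ : Fin nB → Fin N)
    (r : ℝ) (hr : 0 ≤ r)
    (hσ : ∀ i, ‖a i - p (σ i)‖ ≤ r) (hτ : ∀ j, ‖b j - p (τ j)‖ ≤ r)
    (n m : Fin N → ℝ)
    (hn : ∀ l, n l = ∑ i ∈ Finset.univ.filter (fun i => σ i = l), α i)
    (hm : ∀ l, m l = ∑ j ∈ Finset.univ.filter (fun j => τ j = l), β j) :
    |Cost p (fun l => max (n l - m l) 0) p (fun l => max (m l - n l) 0)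
        - Cost a α b β| ≤ 2 * r * W :=
  reduced_instance_cost_error_general a α b β W hα hβ hαW hβW p σ τ r hσ hτ n m hn hm
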